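/- Over the alphabet A = {x, y, z}, the 3-variable language L = {(y, x^n, x^{2n}) : n >= 0} union {(z, x^{2n}, x^n) : n >= 0} is quasi-regular, but its projection {(b, c) in (A*)^2 : there exists a in A* with (a, b, c) in L} = {(x^n, x^{2n}) : n >= 0} union {(x^{2n}, x^n) : n >= 0} is not quasi-regular. In particular, the projection of a quasi-regular language need not be quasi-regular. -/

import Mathlib

/-- An `n`-tape semi-sorted (deterministic) asynchronous automaton over `A`:
a partial deterministic finite state automaton over `A ∪ {$}` (unique start state,
no `ε`-transitions, at most one transition from each state for each letter; the
padding symbol `$` is modelled by `none : Option A`), together with a partition of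
its states into `n` sets (recorded by `tape`, where `tape s = i` means `s ∈ S_i`). -/
structure SemiSortedAA (A : Type) (n : ℕ) where
  State : Type
  fintype : Fintype State
  start : State
  accept : Set State
  /-- partial deterministic transition function over the alphabet `A ∪ {$}` -/
  step : State → Option A → Option State
  /-- the index `i` such that the state lies in `S_i` -/
  tape : State → Fin n

namespace SemiSortedAA

variable {A : Type} {n : ℕ}

/-- `M.Run s r f` : starting in state `s` with remaining (still unread) content `r i`
on the `i`-th tape, the automaton can consume all the remaining content and end in
state `f`, where from a state `s` it reads the next letter of tape `M.tape s`.
This is exactly the existence of a shuffle of the tape contents labelling a path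
from `s` to `f` in which every letter originating from the `i`-th tape is read
while the automaton is in a state of `S_i`. -/
inductive Run (M : SemiSortedAA A n) :
    M.State → (Fin n → List (Option A)) → M.State → Prop
  | nil (s : M.State) : Run M s (fun _ => []) s
  | step {s t f : M.State} {c : Option A} {rest : List (Option A)}
      {r : Fin n → List (Option A)}
      (h : M.step s c = some t)
      (hr : r (M.tape s) = c :: rest)
      (hrun : Run M t (Function.update r (M.tape s) rest) f) :
      Run M s r f

/-- `M` accepts the tuple of words `(w 1, …, w n)` if some shuffle of
`(w 1 $, …, w n $)` labels a path from the start state to an accept state,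
each letter from the `i`-th word (including its terminal `$`) being read in `S_i`. -/
def Accepts (M : SemiSortedAA A n) (w : Fin n → List A) : Prop :=
  ∃ f ∈ M.accept, M.Run M.start (fun i => (w i).map some ++ [none]) f

end SemiSortedAA

/-- An `n`-variable language is quasi-regular if it is the language accepted by some
`n`-tape semi-sorted asynchronous automaton. -/
def IsQuasiRegular {A : Type} {n : ℕ} (L : Set (Fin n → List A)) : Prop :=
  ∃ M : SemiSortedAA A n, ∀ w, w ∈ L ↔ M.Accepts w

/-- The three-variable language `{(y, x^n, x^{2n})} ∪ {(z, x^{2n}, x^n)}` over the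
alphabet `{x, y, z}` (modelled by `Fin 3` with `x = 0`, `y = 1`, `z = 2`). -/
def L₉ : Set (Fin 3 → List (Fin 3)) :=
  { w | (∃ m : ℕ, w 0 = [1] ∧ w 1 = List.replicate m 0 ∧
            w 2 = List.replicate (2 * m) 0) ∨
        (∃ m : ℕ, w 0 = [2] ∧ w 1 = List.replicate (2 * m) 0 ∧
            w 2 = List.replicate m 0) }

/-- The projection of `L₉` obtained by existentially quantifying the first
coordinate. -/
def proj₉ : Set (Fin 2 → List (Fin 3)) :=
  { v | ∃ a : List (Fin 3), Fin.cons a v ∈ L₉ }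

/-! `L₉` is accepted by an automaton that reads the first word, `y` or `z`, and then alternately
one `x` from the tape that should hold `xⁿ` and two from the tape that should hold `x²ⁿ`.

Without the first tape this choice is impossible. On inputs `(xᵖ$, x^q$)` a deterministic
automaton follows a single path while it reads `x`'s, so its runs on `(xᵐ, x²ᵐ)` and `(x²ᵐ, xᵐ)`
agree until the path is about to read an `(m+1)`-st letter from some tape, having read at most `m`
from the other. One of the runs reads `$` there, and then at least `m` more letters from the other
tape alone. If `m` exceeds the number of states, that stretch runs through a loop; pumping it
yields an accepted pair `(xᵐ, x^(2m+e))` or `(x^(2m+e), xᵐ)` with `e > 0`, which is not in the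
projection. -/

section VecUpdate

variable {α : Type*} (a b c : α)

@[simp] theorem update_vec_two_zero : Function.update ![a, b] 0 c = ![c, b] := by
  ext i; fin_cases i <;> rfl

@[simp] theorem update_vec_two_one : Function.update ![a, b] 1 c = ![a, c] := by
  ext i; fin_cases i <;> rfl

theorem vec_two_nil_left (l : List α) : ![[], l] = Function.update (fun _ => []) 1 l := by
  ext i; fin_cases i <;> rfl

theorem vec_two_nil_right (l : List α) : ![l, []] = Function.update (fun _ => []) 0 l := by
  ext i; fin_cases i <;> rfl

end VecUpdate

namespace SemiSortedAA

variable {A : Type} {n : ℕ}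

instance (M : SemiSortedAA A n) : Fintype M.State := M.fintype

def padded (w : List A) : List (Option A) := w.map some ++ [none]

theorem padded_injective : Function.Injective (padded : List A → List (Option A)) :=
  fun _ _ h => List.map_injective_iff.2 (Option.some_injective _) (List.append_cancel_right h)

theorem padded_replicate (k : ℕ) (x : A) :
    padded (.replicate k x) = List.replicate k (some x) ++ [none] := by
  simp [padded, List.map_replicate]

variable {M : SemiSortedAA A n} {s f : M.State} {r : Fin n → List (Option A)}

theorem run_iff_of_tape_eq_nil (hr : r (M.tape s) = []) :
    M.Run s r f ↔ r = (fun _ => []) ∧ s = f := by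
  constructor
  · rintro (_ | ⟨_, hr', _⟩)
    · exact ⟨rfl, rfl⟩
    · simp [hr] at hr'
  · rintro ⟨rfl, rfl⟩
    exact .nil s

theorem run_iff_of_tape_eq_cons {c : Option A} {rest : List (Option A)}
    (hr : r (M.tape s) = c :: rest) :
    M.Run s r f ↔ ∃ t, M.step s c = some t ∧ M.Run t (Function.update r (M.tape s) rest) f := by
  constructor
  · rintro (_ | ⟨hs, hr', hrun⟩)
    · simp at hr
    · obtain ⟨rfl, rfl⟩ := List.cons.inj (hr'.symm.trans hr)
      exact ⟨_, hs, hrun⟩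
  · rintro ⟨t, hs, hrun⟩
    exact .step hs hr hrun

theorem exists_run_of_forall_mem {P : M.State → Set (Fin n → List (Option A))} {F : Set M.State}
    (hP : ∀ s, ∀ r ∈ P s, (r = (fun _ => []) ∧ s ∈ F) ∨
      ∃ c rest t, r (M.tape s) = c :: rest ∧ M.step s c = some t ∧
        Function.update r (M.tape s) rest ∈ P t)
    {s : M.State} {r : Fin n → List (Option A)} (hr : r ∈ P s) : ∃ f ∈ F, M.Run s r f := by
  rcases hP s r hr with ⟨rfl, hs⟩ | ⟨c, rest, t, hrc, hst, hrest⟩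
  · exact ⟨s, hs, .nil s⟩
  · obtain ⟨f, hf, h⟩ := exists_run_of_forall_mem hP hrest
    exact ⟨f, hf, .step hst hrc h⟩
termination_by ∑ i, (r i).length
decreasing_by
  have hsplit (v : Fin n → List (Option A)) : ∑ i, (v i).length =
      (v (M.tape s)).length + ∑ i ∈ Finset.univ.erase (M.tape s), (v i).length :=
    (Finset.add_sum_erase _ _ (Finset.mem_univ _)).symm
  rw [hsplit r, hsplit (Function.update r (M.tape s) rest), hrc, Function.update_self,
    List.length_cons, Finset.sum_congr rfl fun i hi => by
      rw [Function.update_of_ne (Finset.ne_of_mem_erase hi)]]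
  omega

theorem mem_of_run {P : M.State → Set (Fin n → List (Option A))} {F : Set M.State}
    (hF : ∀ f ∈ F, (fun _ => []) ∈ P f)
    (hP : ∀ s c t rest r, M.step s c = some t → r (M.tape s) = c :: rest →
      Function.update r (M.tape s) rest ∈ P t → r ∈ P s)
    (h : M.Run s r f) (hf : f ∈ F) : r ∈ P s := by
  induction h with
  | nil s => exact hF s hf
  | step hst hr _ ih => exact hP _ _ _ _ _ hst hr (ih hf)

/-- `M` restricted to the states of `S_i`; the state `none` is a sink. -/
def tapeDFA (M : SemiSortedAA A n) (i : Fin n) : DFA (Option A) (Option M.State) where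
  step o c := o.bind fun s => if M.tape s = i then M.step s c else none
  start := some M.start
  accept := some '' M.accept

@[simp]
theorem tapeDFA_step_some (i : Fin n) (s : M.State) (c : Option A) :
    (M.tapeDFA i).step (some s) c = if M.tape s = i then M.step s c else none := rfl

@[simp]
theorem tapeDFA_evalFrom_none (i : Fin n) (w : List (Option A)) :
    (M.tapeDFA i).evalFrom none w = none := by
  induction w with
  | nil => rfl
  | cons c w ih => exact ih

theorem run_update_nil_iff {i : Fin n} {w : List (Option A)} :
    M.Run s (Function.update (fun _ => []) i w) f ↔
      (M.tapeDFA i).evalFrom (some s) w = some f := by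
  induction w generalizing s with
  | nil => simp [run_iff_of_tape_eq_nil]
  | cons c w ih =>
    by_cases hs : M.tape s = i
    · rw [run_iff_of_tape_eq_cons (c := c) (rest := w) (by simp [hs])]
      cases h : M.step s c <;> simp [hs, h, ih]
    · rw [run_iff_of_tape_eq_nil (by simp [hs])]
      simp [hs]

theorem exists_run_replicate_gt {i : Fin n} {x : A} {k : ℕ}
    (h : M.Run s (Function.update (fun _ => []) i (padded (.replicate k x))) f)
    (hk : Fintype.card M.State < k) :
    ∃ k' > k, M.Run s (Function.update (fun _ => []) i (padded (.replicate k' x))) f := by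
  simp only [run_update_nil_iff, padded_replicate, DFA.evalFrom_of_append] at h ⊢
  obtain ⟨q, a, b, c, hw, -, hb, ha, hbq, hc⟩ :=
    (M.tapeDFA i).evalFrom_split (s := some s) (x := .replicate k (some x)) (by simpa) rfl
  have hpump : List.replicate (k + b.length) (some x) = a ++ b ++ b ++ c := by
    rw [eq_comm, List.eq_replicate_iff]
    have := congrArg List.length hw
    refine ⟨by simp at this ⊢; omega, fun y hy => ?_⟩
    apply List.eq_of_mem_replicate (n := k)
    simp only [hw, List.mem_append] at hy ⊢
    tauto
  refine ⟨k + b.length, by simpa [Nat.pos_iff_ne_zero] using hb, ?_⟩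
  rwa [hpump, DFA.evalFrom_of_append, DFA.evalFrom_of_append, DFA.evalFrom_of_append, ha, hbq,
    hbq, hc]

section TwoTapes

variable {M : SemiSortedAA A 2}

theorem accepts_vec_two_iff {w₁ w₂ : List A} :
    M.Accepts ![w₁, w₂] ↔ ∃ f ∈ M.accept, M.Run M.start ![padded w₁, padded w₂] f := by
  rw [Accepts, show (fun i => (![w₁, w₂] i).map some ++ [none]) = ![padded w₁, padded w₂] by
    ext i; fin_cases i <;> rfl]

theorem exists_run_dollar_replicate_gt_of_tape_eq_zero {x : A} {s f : M.State} {k : ℕ}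
    (hs : M.tape s = 0) (h : M.Run s ![[none], padded (.replicate k x)] f)
    (hk : Fintype.card M.State < k) :
    ∃ k' > k, M.Run s ![[none], padded (.replicate k' x)] f := by
  obtain ⟨t, hst, h⟩ := (run_iff_of_tape_eq_cons (by rw [hs]; rfl)).1 h
  rw [hs, update_vec_two_zero, vec_two_nil_left] at h
  obtain ⟨k', hk', h⟩ := exists_run_replicate_gt h hk
  refine ⟨k', hk', (run_iff_of_tape_eq_cons (by rw [hs]; rfl)).2 ⟨t, hst, ?_⟩⟩
  rwa [hs, update_vec_two_zero, vec_two_nil_left]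

theorem exists_run_dollar_replicate_gt_of_tape_eq_one {x : A} {s f : M.State} {k : ℕ}
    (hs : M.tape s = 1) (h : M.Run s ![padded (.replicate k x), [none]] f)
    (hk : Fintype.card M.State < k) :
    ∃ k' > k, M.Run s ![padded (.replicate k' x), [none]] f := by
  obtain ⟨t, hst, h⟩ := (run_iff_of_tape_eq_cons (by rw [hs]; rfl)).1 h
  rw [hs, update_vec_two_one, vec_two_nil_right] at h
  obtain ⟨k', hk', h⟩ := exists_run_replicate_gt h hk
  refine ⟨k', hk', (run_iff_of_tape_eq_cons (by rw [hs]; rfl)).2 ⟨t, hst, ?_⟩⟩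
  rwa [hs, update_vec_two_one, vec_two_nil_right]

theorem exists_run_pumped {x : A} {s f₁ f₂ : M.State} {p q d : ℕ}
    (hd : Fintype.card M.State < d)
    (h₁ : M.Run s ![padded (.replicate p x), padded (.replicate (q + d) x)] f₁)
    (h₂ : M.Run s ![padded (.replicate (p + d) x), padded (.replicate q x)] f₂) :
    (∃ e > d, M.Run s ![padded (.replicate p x), padded (.replicate (q + e) x)] f₁) ∨
      (∃ e > d, M.Run s ![padded (.replicate (p + e) x), padded (.replicate q x)] f₂) := by
  obtain hs | hs : M.tape s = 0 ∨ M.tape s = 1 := by omega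
  · cases p with
    | zero =>
      obtain ⟨k, hk, h₁⟩ := exists_run_dollar_replicate_gt_of_tape_eq_zero hs h₁ (by omega)
      exact .inl ⟨k - q, by omega, by rwa [Nat.add_sub_cancel' (by omega)]⟩
    | succ p =>
      obtain ⟨t, hst, h₁⟩ := (run_iff_of_tape_eq_cons (by rw [hs]; rfl)).1 h₁
      rw [Nat.add_right_comm] at h₂
      obtain ⟨t', hst', h₂⟩ := (run_iff_of_tape_eq_cons (by rw [hs]; rfl)).1 h₂
      obtain rfl : t = t' := Option.some.inj (hst.symm.trans hst')
      rw [hs, update_vec_two_zero] at h₁ h₂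
      rcases exists_run_pumped hd h₁ h₂ with ⟨e, he, h⟩ | ⟨e, he, h⟩
      · refine .inl ⟨e, he, (run_iff_of_tape_eq_cons (by rw [hs]; rfl)).2 ⟨t, hst, ?_⟩⟩
        rwa [hs, update_vec_two_zero]
      · refine .inr ⟨e, he, (run_iff_of_tape_eq_cons (by rw [hs, Nat.add_right_comm]; rfl)).2
          ⟨t, hst, ?_⟩⟩
        rwa [hs, update_vec_two_zero]
  · cases q with
    | zero =>
      obtain ⟨k, hk, h₂⟩ := exists_run_dollar_replicate_gt_of_tape_eq_one hs h₂ (by omega)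
      exact .inr ⟨k - p, by omega, by rwa [Nat.add_sub_cancel' (by omega)]⟩
    | succ q =>
      rw [Nat.add_right_comm] at h₁
      obtain ⟨t, hst, h₁⟩ := (run_iff_of_tape_eq_cons (by rw [hs]; rfl)).1 h₁
      obtain ⟨t', hst', h₂⟩ := (run_iff_of_tape_eq_cons (by rw [hs]; rfl)).1 h₂
      obtain rfl : t = t' := Option.some.inj (hst.symm.trans hst')
      rw [hs, update_vec_two_one] at h₁ h₂
      rcases exists_run_pumped hd h₁ h₂ with ⟨e, he, h⟩ | ⟨e, he, h⟩
      · refine .inl ⟨e, he, (run_iff_of_tape_eq_cons (by rw [hs, Nat.add_right_comm]; rfl)).2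
          ⟨t, hst, ?_⟩⟩
        rwa [hs, update_vec_two_one]
      · refine .inr ⟨e, he, (run_iff_of_tape_eq_cons (by rw [hs]; rfl)).2 ⟨t, hst, ?_⟩⟩
        rwa [hs, update_vec_two_one]
termination_by p + q

end TwoTapes

end SemiSortedAA

open SemiSortedAA

inductive L₉State
  | start | sawY | sawZ | y₀ | y₁ | y₂ | yEnd | z₀ | z₁ | z₂ | zEnd | done
  deriving DecidableEq

instance : Fintype L₉State :=
  Fintype.ofList [.start, .sawY, .sawZ, .y₀, .y₁, .y₂, .yEnd, .z₀, .z₁, .z₂, .zEnd, .done]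
    (by intro s; cases s <;> simp)

def step₉ : L₉State → Option (Fin 3) → Option L₉State
  | .start, some 1 => some .sawY
  | .start, some 2 => some .sawZ
  | .sawY, none => some .y₀
  | .sawZ, none => some .z₀
  | .y₀, some 0 => some .y₁
  | .y₀, none => some .yEnd
  | .y₁, some 0 => some .y₂
  | .y₂, some 0 => some .y₀
  | .yEnd, none => some .done
  | .z₀, some 0 => some .z₁
  | .z₀, none => some .zEnd
  | .z₁, some 0 => some .z₂
  | .z₂, some 0 => some .z₀
  | .zEnd, none => some .done
  | _, _ => none

def tape₉ : L₉State → Fin 3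
  | .start | .sawY | .sawZ | .done => 0
  | .y₀ | .z₁ | .z₂ | .zEnd => 1
  | .y₁ | .y₂ | .yEnd | .z₀ => 2

def M₉ : SemiSortedAA (Fin 3) 3 where
  State := L₉State
  fintype := inferInstance
  start := .start
  accept := {.done}
  step := step₉
  tape := tape₉

/-- The tape contents with which `M₉` gets from `s` to `done`. -/
def remaining₉ : L₉State → Set (Fin 3 → List (Option (Fin 3)))
  | .start => {r | ∃ w ∈ L₉, r = fun i => padded (w i)}
  | .sawY => Set.range fun m => ![[none], padded (.replicate m 0), padded (.replicate (2 * m) 0)]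
  | .y₀ => Set.range fun m => ![[], padded (.replicate m 0), padded (.replicate (2 * m) 0)]
  | .y₁ => Set.range fun m => ![[], padded (.replicate m 0), padded (.replicate (2 * m + 2) 0)]
  | .y₂ => Set.range fun m => ![[], padded (.replicate m 0), padded (.replicate (2 * m + 1) 0)]
  | .yEnd => {![[], [], [none]]}
  | .sawZ => Set.range fun m => ![[none], padded (.replicate (2 * m) 0), padded (.replicate m 0)]
  | .z₀ => Set.range fun m => ![[], padded (.replicate (2 * m) 0), padded (.replicate m 0)]
  | .z₁ => Set.range fun m => ![[], padded (.replicate (2 * m + 2) 0), padded (.replicate m 0)]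
  | .z₂ => Set.range fun m => ![[], padded (.replicate (2 * m + 1) 0), padded (.replicate m 0)]
  | .zEnd => {![[], [none], []]}
  | .done => {fun _ => []}

theorem remaining₉_progress (s : L₉State) (r : Fin 3 → List (Option (Fin 3)))
    (hr : r ∈ remaining₉ s) :
    (r = (fun _ => []) ∧ s ∈ M₉.accept) ∨
      ∃ c rest t, r (M₉.tape s) = c :: rest ∧ M₉.step s c = some t ∧
        Function.update r (M₉.tape s) rest ∈ remaining₉ t := by
  cases s
  case start =>
    obtain ⟨w, ⟨m, h0, h1, h2⟩ | ⟨m, h0, h1, h2⟩, rfl⟩ := hr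
    · refine .inr ⟨some 1, [none], .sawY, by simp [M₉, tape₉, h0, padded], rfl, m, ?_⟩
      funext j; fin_cases j <;> simp [M₉, tape₉, h1, h2]
    · refine .inr ⟨some 2, [none], .sawZ, by simp [M₉, tape₉, h0, padded], rfl, m, ?_⟩
      funext j; fin_cases j <;> simp [M₉, tape₉, h1, h2]
  case done => exact .inl ⟨hr, rfl⟩
  case y₀ | z₀ =>
    obtain ⟨_ | m, rfl⟩ := hr <;> refine .inr ⟨_, _, _, rfl, rfl, ?_⟩
    · funext j; fin_cases j <;> rfl
    · refine ⟨m, ?_⟩; funext j; fin_cases j <;> rfl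
  all_goals first
    | obtain ⟨m, rfl⟩ := hr
      refine .inr ⟨_, _, _, rfl, rfl, m, ?_⟩
      funext j; fin_cases j <;> rfl
    | obtain rfl := hr
      refine .inr ⟨_, _, _, rfl, rfl, ?_⟩
      funext j; fin_cases j <;> rfl

theorem mem_remaining₉_of_step (s : L₉State) (c : Option (Fin 3)) (t : L₉State)
    (rest : List (Option (Fin 3))) (r : Fin 3 → List (Option (Fin 3))) (hst : M₉.step s c = some t)
    (hr : r (M₉.tape s) = c :: rest) (h : Function.update r (M₉.tape s) rest ∈ remaining₉ t) :
    r ∈ remaining₉ s := by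
  set v := Function.update r (M₉.tape s) rest
  have hrv : r = Function.update v (M₉.tape s) (c :: v (M₉.tape s)) := by simp [v, ← hr]
  clear_value v
  subst hrv
  cases s <;> rcases c with _ | c <;> (try fin_cases c) <;> cases hst
  -- a parameter `m` of `remaining₉ t` becomes `m` or `m + 1` at `s`
  all_goals first
    | obtain ⟨m, rfl⟩ := h
      first
        | (refine ⟨m, ?_⟩; funext j; fin_cases j <;> rfl)
        | (refine ⟨m + 1, ?_⟩; funext j; fin_cases j <;> rfl)
        | (refine ⟨![[1], .replicate m 0, .replicate (2 * m) 0], .inl ⟨m, rfl, rfl, rfl⟩, ?_⟩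
           funext j; fin_cases j <;> rfl)
        | (refine ⟨![[2], .replicate (2 * m) 0, .replicate m 0], .inr ⟨m, rfl, rfl, rfl⟩, ?_⟩
           funext j; fin_cases j <;> rfl)
    | obtain rfl := h
      first
        | (refine ⟨0, ?_⟩; funext j; fin_cases j <;> rfl)
        | (funext j; fin_cases j <;> rfl)

theorem isQuasiRegular_L₉ : IsQuasiRegular L₉ := by
  refine ⟨M₉, fun w => ⟨fun hw => ?_, fun ⟨f, hf, h⟩ => ?_⟩⟩
  · exact exists_run_of_forall_mem (M := M₉) remaining₉_progress (s := .start) ⟨w, hw, rfl⟩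
  · obtain ⟨w', hw', hww'⟩ :=
      mem_of_run (M := M₉) (P := remaining₉) (by rintro _ rfl; rfl) mem_remaining₉_of_step h hf
    obtain rfl : w = w' := funext fun i => padded_injective (congrFun hww' i)
    exact hw'

theorem proj₉_eq :
    proj₉ =
      ({ v : Fin 2 → List (Fin 3) |
          ∃ m : ℕ, v 0 = List.replicate m 0 ∧ v 1 = List.replicate (2 * m) 0 } ∪
        { v : Fin 2 → List (Fin 3) |
          ∃ m : ℕ, v 0 = List.replicate (2 * m) 0 ∧ v 1 = List.replicate m 0 }) := by
  ext v
  constructor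
  · rintro ⟨a, ⟨m, -, h⟩ | ⟨m, -, h⟩⟩
    · exact .inl ⟨m, h⟩
    · exact .inr ⟨m, h⟩
  · rintro (⟨m, h⟩ | ⟨m, h⟩)
    · exact ⟨[1], .inl ⟨m, rfl, h⟩⟩
    · exact ⟨[2], .inr ⟨m, rfl, h⟩⟩

theorem vec_replicate_mem_proj₉_iff {p q : ℕ} :
    ![.replicate p 0, .replicate q 0] ∈ proj₉ ↔ q = 2 * p ∨ p = 2 * q := by
  simp [proj₉_eq, List.replicate_inj]

theorem not_isQuasiRegular_proj₉ : ¬ IsQuasiRegular proj₉ := by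
  rintro ⟨M, hM⟩
  set m := Fintype.card M.State + 1
  have accepts_iff (p q : ℕ) :
      (∃ f ∈ M.accept, M.Run M.start ![padded (.replicate p 0), padded (.replicate q 0)] f) ↔
        q = 2 * p ∨ p = 2 * q := by
    rw [← accepts_vec_two_iff, ← hM, vec_replicate_mem_proj₉_iff]
  obtain ⟨f₁, hf₁, h₁⟩ := (accepts_iff m (m + m)).2 (.inl (two_mul m).symm)
  obtain ⟨f₂, hf₂, h₂⟩ := (accepts_iff (m + m) m).2 (.inr (two_mul m).symm)
  rcases exists_run_pumped (Nat.lt_succ_self _) h₁ h₂ with ⟨e, he, h⟩ | ⟨e, he, h⟩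
  · have := (accepts_iff _ _).1 ⟨f₁, hf₁, h⟩; omega
  · have := (accepts_iff _ _).1 ⟨f₂, hf₂, h⟩; omega

/-- Over `A = {x, y, z}`, the language `L₉ = {(y, x^n, x^{2n})} ∪ {(z, x^{2n}, x^n)}`
is quasi-regular, but its projection onto the last two coordinates, which equals
`{(x^n, x^{2n})} ∪ {(x^{2n}, x^n)}`, is not quasi-regular: the projection of a
quasi-regular language need not be quasi-regular. -/
theorem proj_of_quasiRegular_not_quasiRegular :
    IsQuasiRegular L₉ ∧
    proj₉ =
      ({ v : Fin 2 → List (Fin 3) |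
          ∃ m : ℕ, v 0 = List.replicate m 0 ∧ v 1 = List.replicate (2 * m) 0 } ∪
        { v : Fin 2 → List (Fin 3) |
          ∃ m : ℕ, v 0 = List.replicate (2 * m) 0 ∧ v 1 = List.replicate m 0 }) ∧
    ¬ IsQuasiRegular proj₉ :=
  ⟨isQuasiRegular_L₉, proj₉_eq, not_isQuasiRegular_proj₉⟩
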